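/- Let d ≥ 1, let ω : Fin d → ℝ be injective, fix ν ∈ ℝ with ν ≠ 0, and let M_ν := {(x,y) ∈ Fin d × Fin d : ω_x − ω_y = ν}. Let P be a real d×d matrix with nonnegative entries and each column summing to 1. If complex d×d matrices ρ and σ satisfy |σ_{x'y'}| ≤ Σ_{(x,y) ∈ M_ν} √(P_{x'|x}·P_{y'|y})·|ρ_{xy}| for all (x',y') ∈ M_ν, then Σ_{(x',y') ∈ M_ν} |σ_{x'y'}| ≤ Σ_{(x,y) ∈ M_ν} |ρ_{xy}|; i.e., the total coherence S_ν within any mode is non-increasing under time-translation covariant operations. -/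

import Mathlib

open Matrix Finset

/-!
Since `ω` is injective, a pair `(x, y)` of the mode `M_ν` is determined by either of its
coordinates. Hence, for fixed `(x, y)`, the AM-GM bound
`√(P_{x'|x} P_{y'|y}) ≤ (P_{x'|x} + P_{y'|y}) / 2` summed over `(x', y') ∈ M_ν` is at most half
of two column sums of `P`, i.e. at most `1`. Summing the hypothesis over the mode and exchanging
the order of summation then bounds `Σ_{M_ν} |σ|` by `Σ_{M_ν} |ρ|`.
-/

lemma Real.sqrt_mul_le_add_div_two {a b : ℝ} (ha : 0 ≤ a) (hb : 0 ≤ b) :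
    √(a * b) ≤ (a + b) / 2 :=
  Real.sqrt_le_iff.mpr ⟨by positivity, by nlinarith [sq_nonneg (a - b)]⟩

lemma Finset.sum_comp_le_sum_univ_of_injOn {α ι : Type*} [Fintype ι] {s : Finset α}
    {f : α → ι} (hf : Set.InjOn f s) {g : ι → ℝ} (hg : ∀ i, 0 ≤ g i) :
    ∑ a ∈ s, g (f a) ≤ ∑ i, g i := by
  classical
  rw [← Finset.sum_image hf]
  exact Finset.sum_le_univ_sum_of_nonneg hg

lemma Finset.sum_le_sum_of_le_sum_kernel {α β : Type*} {s : Finset α} {t : Finset β}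
    {a : α → ℝ} {b : β → ℝ} (K : α → β → ℝ) (hb : ∀ q ∈ t, 0 ≤ b q)
    (hK : ∀ q ∈ t, ∑ p ∈ s, K p q ≤ 1) (hab : ∀ p ∈ s, a p ≤ ∑ q ∈ t, K p q * b q) :
    ∑ p ∈ s, a p ≤ ∑ q ∈ t, b q :=
  calc ∑ p ∈ s, a p
      ≤ ∑ p ∈ s, ∑ q ∈ t, K p q * b q := Finset.sum_le_sum hab
    _ = ∑ q ∈ t, (∑ p ∈ s, K p q) * b q := by
        rw [Finset.sum_comm]
        simp only [Finset.sum_mul]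
    _ ≤ ∑ q ∈ t, b q :=
        Finset.sum_le_sum fun q hq => mul_le_of_le_one_left (hb q hq) (hK q hq)

section Mode

variable {ι G : Type*} [AddCommGroup G] {ω : ι → G} {ν : G} {s : Set (ι × ι)}

lemma injOn_fst_of_sub_eq (hω : Function.Injective ω) (hs : ∀ p ∈ s, ω p.1 - ω p.2 = ν) :
    Set.InjOn Prod.fst s := fun p hp q hq h =>
  Prod.ext h (hω (sub_right_injective <|
    show ω p.1 - ω p.2 = ω p.1 - ω q.2 by rw [hs p hp, h, hs q hq]))

lemma injOn_snd_of_sub_eq (hω : Function.Injective ω) (hs : ∀ p ∈ s, ω p.1 - ω p.2 = ν) :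
    Set.InjOn Prod.snd s := fun p hp q hq h =>
  Prod.ext (hω (sub_left_injective <|
    show ω p.1 - ω p.2 = ω q.1 - ω p.2 by rw [hs p hp, h, hs q hq])) h

end Mode

lemma sum_sqrt_mul_le_one_of_injOn {ι : Type*} [Fintype ι] {M : Finset (ι × ι)}
    (hfst : Set.InjOn Prod.fst (M : Set (ι × ι))) (hsnd : Set.InjOn Prod.snd (M : Set (ι × ι)))
    {P : Matrix ι ι ℝ}
    (hPnn : ∀ i j, 0 ≤ P i j) (hPcol : ∀ j, ∑ i, P i j = 1) (x y : ι) :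
    ∑ p ∈ M, √(P p.1 x * P p.2 y) ≤ 1 :=
  calc ∑ p ∈ M, √(P p.1 x * P p.2 y)
      ≤ ∑ p ∈ M, (P p.1 x + P p.2 y) / 2 :=
        Finset.sum_le_sum fun p _ => Real.sqrt_mul_le_add_div_two (hPnn _ _) (hPnn _ _)
    _ = ((∑ p ∈ M, P p.1 x) + ∑ p ∈ M, P p.2 y) / 2 := by
        rw [← Finset.sum_add_distrib, Finset.sum_div]
    _ ≤ ((∑ i, P i x) + ∑ i, P i y) / 2 := by
        gcongr
        · exact Finset.sum_comp_le_sum_univ_of_injOn hfst (hPnn · x)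
        · exact Finset.sum_comp_le_sum_univ_of_injOn hsnd (hPnn · y)
    _ = 1 := by rw [hPcol, hPcol]; norm_num

theorem mode_coherence_nonincreasing_general
    (d : ℕ) (ω : Fin d → ℝ) (hω : Function.Injective ω)
    (ν : ℝ)
    (Mν : Finset (Fin d × Fin d))
    (hMν : Mν = Finset.univ.filter (fun p : Fin d × Fin d => ω p.1 - ω p.2 = ν))
    (P : Matrix (Fin d) (Fin d) ℝ)
    (hPnn : ∀ x' x, 0 ≤ P x' x)
    (hPcol : ∀ x, ∑ x', P x' x = 1)
    (ρ σ : Matrix (Fin d) (Fin d) ℂ)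
    (hbound : ∀ p ∈ Mν, ‖σ p.1 p.2‖ ≤
      ∑ q ∈ Mν, Real.sqrt (P p.1 q.1 * P p.2 q.2) * ‖ρ q.1 q.2‖) :
    ∑ p ∈ Mν, ‖σ p.1 p.2‖ ≤ ∑ p ∈ Mν, ‖ρ p.1 p.2‖ := by
  have hmode : ∀ p ∈ (Mν : Set (Fin d × Fin d)), ω p.1 - ω p.2 = ν := fun p hp => by
    rw [Finset.mem_coe, hMν, Finset.mem_filter] at hp
    exact hp.2
  have hfst := injOn_fst_of_sub_eq hω hmode
  have hsnd := injOn_snd_of_sub_eq hω hmode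
  exact Finset.sum_le_sum_of_le_sum_kernel (fun p q => √(P p.1 q.1 * P p.2 q.2))
    (fun _ _ => norm_nonneg _)
    (fun q _ => sum_sqrt_mul_le_one_of_injOn hfst hsnd hPnn hPcol q.1 q.2) hbound

/-- **Mode coherence is non-increasing under covariant operations.** For a nonzero mode
`M_ν` and a column-stochastic population transfer matrix `P`, any pair `(ρ, σ)` satisfying
the covariant decoherence bound `|σ_{x'y'}| ≤ Σ_{(x,y)∈M_ν} √(P_{x'|x}P_{y'|y})|ρ_{xy}|`
entrywise on the mode satisfies `Σ_{M_ν}|σ| ≤ Σ_{M_ν}|ρ|`. -/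
theorem mode_coherence_nonincreasing
    (d : ℕ) (hd : 1 ≤ d) (ω : Fin d → ℝ) (hω : Function.Injective ω)
    (ν : ℝ) (hν : ν ≠ 0)
    (Mν : Finset (Fin d × Fin d))
    (hMν : Mν = Finset.univ.filter (fun p : Fin d × Fin d => ω p.1 - ω p.2 = ν))
    (P : Matrix (Fin d) (Fin d) ℝ)
    (hPnn : ∀ x' x, 0 ≤ P x' x)
    (hPcol : ∀ x, ∑ x', P x' x = 1)
    (ρ σ : Matrix (Fin d) (Fin d) ℂ)
    (hbound : ∀ p ∈ Mν, ‖σ p.1 p.2‖ ≤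
      ∑ q ∈ Mν, Real.sqrt (P p.1 q.1 * P p.2 q.2) * ‖ρ q.1 q.2‖) :
    ∑ p ∈ Mν, ‖σ p.1 p.2‖ ≤ ∑ p ∈ Mν, ‖ρ p.1 p.2‖ :=
  mode_coherence_nonincreasing_general d ω hω ν Mν hMν P hPnn hPcol ρ σ hbound
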